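/- arXiv:math/0305335 — 3 statements merged into one kernel-verified Lean document; each statement's English description precedes it below -/
import Mathlib

section
/- Let n : [0,∞) → [0,∞) be nondecreasing, with n(t) = 0 for all t ∈ [0,δ] for some δ > 0. Suppose that lim_{r→∞} (1/r) ∫₀^r n(t)/t dt = A for some A ∈ ℝ. Then lim_{r→∞} n(r)/r = A. -/
open Filter MeasureTheory

lemma tauberian_aux (m : ℝ → ℝ) (hm : Monotone m) (hnn : ∀ t, 0 ≤ m t)
    (δ : ℝ) (hδ : 0 < δ) (hz : ∀ t ≤ δ, m t = 0) (A : ℝ)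
    (hlim : Tendsto (fun r : ℝ => (1 / r) * ∫ t in (0:ℝ)..r, m t / t) atTop (nhds A)) :
    Tendsto (fun r : ℝ => m r / r) atTop (nhds A) := by
  set g : ℝ → ℝ := fun t => m t / t with hgdef
  set F : ℝ → ℝ := fun r => ∫ t in (0:ℝ)..r, g t with hFdef
  have hlim' : Tendsto (fun r : ℝ => (1 / r) * F r) atTop (nhds A) := hlim
  have hgnn : ∀ t, 0 ≤ g t := by
    intro t
    rcases le_or_gt t δ with h | h
    · simp [hgdef, hz t h]
    · exact div_nonneg (hnn t) (by linarith)
  have hgmeas : Measurable g := hm.measurable.div measurable_id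
  -- interval integrability on [0, b]
  have hInt : ∀ b : ℝ, 0 ≤ b → IntervalIntegrable g volume 0 b := by
    intro b hb
    rw [intervalIntegrable_iff_integrableOn_Icc_of_le hb]
    apply Measure.integrableOn_of_bounded (M := m b / δ) (measure_Icc_lt_top).ne
      hgmeas.aestronglyMeasurable
    refine ae_restrict_of_forall_mem measurableSet_Icc ?_
    intro x hx
    rw [Real.norm_eq_abs, abs_of_nonneg (hgnn x)]
    rcases le_or_gt x δ with h | h
    · have : g x = 0 := by simp [hgdef, hz x h]
      rw [this]
      exact div_nonneg (hnn b) hδ.le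
    · exact div_le_div₀ (hnn b) (hm hx.2) hδ h.le
  have hInt' : ∀ r s : ℝ, 0 ≤ r → r ≤ s → IntervalIntegrable g volume r s := by
    intro r s hr hrs
    exact (hInt s (hr.trans hrs)).mono_set
      (by rw [Set.uIcc_of_le hrs, Set.uIcc_of_le (hr.trans hrs)]; exact Set.Icc_subset_Icc hr le_rfl)
  have hdiff : ∀ r s : ℝ, 0 ≤ r → r ≤ s → F s - F r = ∫ t in r..s, g t := by
    intro r s hr hrs
    exact intervalIntegral.integral_interval_sub_left (hInt s (hr.trans hrs)) (hInt r hr)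
  -- integral of c / t
  have hconst : ∀ (c r s : ℝ), 0 < r → r ≤ s →
      (∫ t in r..s, c / t) = c * (Real.log s - Real.log r) := by
    intro c r s hr hrs
    have hs : (0:ℝ) < s := lt_of_lt_of_le hr hrs
    have h0 : (0:ℝ) ∉ Set.uIcc r s := by
      rw [Set.uIcc_of_le hrs]
      intro h
      exact absurd h.1 (not_le.2 hr)
    simp_rw [div_eq_mul_inv]
    rw [intervalIntegral.integral_const_mul, integral_inv h0,
      Real.log_div (ne_of_gt hs) (ne_of_gt hr)]
  have hcint : ∀ (c r s : ℝ), 0 < r → r ≤ s → IntervalIntegrable (fun t => c / t) volume r s := by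
    intro c r s hr hrs
    apply ContinuousOn.intervalIntegrable
    apply continuousOn_const.div continuousOn_id
    intro x hx
    rw [Set.uIcc_of_le hrs] at hx
    exact ne_of_gt (lt_of_lt_of_le hr hx.1)
  have hub : ∀ r s : ℝ, 0 < r → r ≤ s →
      m r * (Real.log s - Real.log r) ≤ ∫ t in r..s, g t := by
    intro r s hr hrs
    rw [← hconst (m r) r s hr hrs]
    apply intervalIntegral.integral_mono_on hrs (hcint _ _ _ hr hrs) (hInt' r s hr.le hrs)
    intro x hx
    have hx0 : 0 < x := lt_of_lt_of_le hr hx.1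
    exact div_le_div_of_nonneg_right (hm hx.1) hx0.le
  have hlb : ∀ r s : ℝ, 0 < r → r ≤ s →
      (∫ t in r..s, g t) ≤ m s * (Real.log s - Real.log r) := by
    intro r s hr hrs
    rw [← hconst (m s) r s hr hrs]
    apply intervalIntegral.integral_mono_on hrs (hInt' r s hr.le hrs) (hcint _ _ _ hr hrs)
    intro x hx
    have hx0 : 0 < x := lt_of_lt_of_le hr hx.1
    exact div_le_div_of_nonneg_right (hm hx.2) hx0.le
  -- scaled limits
  have hc : ∀ c : ℝ, 0 < c → Tendsto (fun r : ℝ => (1 / r) * F (c * r)) atTop (nhds (c * A)) := by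
    intro c hc0
    have h1 : Tendsto (fun r : ℝ => c * r) atTop atTop :=
      Tendsto.const_mul_atTop hc0 tendsto_id
    have h2 : Tendsto (fun r : ℝ => c * ((1 / (c * r)) * F (c * r))) atTop (nhds (c * A)) :=
      (hlim'.comp h1).const_mul c
    apply h2.congr'
    filter_upwards [eventually_gt_atTop 0] with r hr
    have : c * r ≠ 0 := by positivity
    field_simp
  have hFnn : ∀ r : ℝ, 0 ≤ r → 0 ≤ F r := by
    intro r hr
    exact intervalIntegral.integral_nonneg hr (fun t _ => hgnn t)
  have hA : 0 ≤ A := by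
    apply ge_of_tendsto hlim'
    filter_upwards [eventually_gt_atTop 0] with r hr
    exact mul_nonneg (by positivity) (hFnn r hr.le)
  -- main argument
  rw [Metric.tendsto_nhds]
  intro ε hε
  have hA1 : (0:ℝ) < 2 * (A + 1) := by linarith
  -- upper bound
  have hupper : ∀ᶠ r : ℝ in atTop, m r / r < A + ε := by
    set lam : ℝ := 1 + ε / (2 * (A + 1)) with hlamdef
    clear_value lam
    have hd : 0 < ε / (2 * (A + 1)) := div_pos hε hA1
    have hlam1 : 1 < lam := by rw [hlamdef]; linarith
    have hlam0 : 0 < lam := by linarith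
    have hlog : 0 < Real.log lam := Real.log_pos hlam1
    have hkey : lam - 1 ≤ lam * Real.log lam := by
      have h := Real.log_le_sub_one_of_pos (show (0:ℝ) < lam⁻¹ by positivity)
      rw [Real.log_inv] at h
      have h3 := mul_le_mul_of_nonneg_left h hlam0.le
      have h4 : lam * lam⁻¹ = 1 := mul_inv_cancel₀ (ne_of_gt hlam0)
      nlinarith
    -- limit value is < A + ε
    have hLlt : (lam * A - A) / Real.log lam < A + ε := by
      rw [div_lt_iff₀ hlog]
      have hkey2 : (lam - 1) / lam ≤ Real.log lam := by
        rw [div_le_iff₀ hlam0]; nlinarith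
      have hAl : A * (lam - 1) < ε := by
        have h : lam - 1 = ε / (2 * (A + 1)) := by rw [hlamdef]; ring
        rw [h, ← mul_div_assoc, div_lt_iff₀ hA1]
        nlinarith
      have h6 : A * lam < A + ε := by nlinarith
      have h7 : 0 < (lam - 1) / lam := div_pos (by linarith) hlam0
      have h8 : A * lam * ((lam - 1) / lam) < (A + ε) * ((lam - 1) / lam) :=
        mul_lt_mul_of_pos_right h6 h7
      have h9 : A * lam * ((lam - 1) / lam) = A * (lam - 1) := by
        field_simp
      have h10 : (A + ε) * ((lam - 1) / lam) ≤ (A + ε) * Real.log lam :=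
        mul_le_mul_of_nonneg_left hkey2 (by linarith)
      nlinarith
    have hto : Tendsto (fun r : ℝ => ((1 / r) * F (lam * r) - (1 / r) * F r) / Real.log lam)
        atTop (nhds ((lam * A - A) / Real.log lam)) :=
      ((hc lam hlam0).sub hlim').div_const _
    have hev := hto.eventually_lt_const hLlt
    filter_upwards [hev, eventually_gt_atTop 0] with r hr1 hr
    refine lt_of_le_of_lt ?_ hr1
    have hrs : r ≤ lam * r := by nlinarith
    have h1 : m r * (Real.log (lam * r) - Real.log r) ≤ F (lam * r) - F r := by
      rw [hdiff r (lam * r) hr.le hrs]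
      exact hub r (lam * r) hr hrs
    have hll : Real.log (lam * r) - Real.log r = Real.log lam := by
      rw [Real.log_mul (ne_of_gt hlam0) (ne_of_gt hr)]; ring
    rw [hll] at h1
    rw [le_div_iff₀ hlog, div_mul_eq_mul_div, div_le_iff₀ hr]
    have hexp : ((1 / r) * F (lam * r) - (1 / r) * F r) * r = F (lam * r) - F r := by
      field_simp
    rw [hexp]
    exact h1
  -- lower bound
  have hlower : ∀ᶠ r : ℝ in atTop, A - ε < m r / r := by
    set mu : ℝ := max (1 / 2) (1 - ε / (2 * (A + 1))) with hmudef
    have hd : 0 < ε / (2 * (A + 1)) := div_pos hε hA1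
    have hmu0 : 0 < mu := lt_of_lt_of_le (by norm_num : (0:ℝ) < 1 / 2) (le_max_left _ _)
    have hmu1 : mu < 1 := max_lt (by norm_num : (1:ℝ) / 2 < 1) (by linarith)
    have hmuge : 1 - ε / (2 * (A + 1)) ≤ mu := le_max_right _ _
    clear_value mu
    have hlogmu : Real.log mu < 0 := Real.log_neg hmu0 hmu1
    have hL' : 0 < -Real.log mu := by linarith
    have hkey : mu * (-Real.log mu) ≤ 1 - mu := by
      have h := Real.log_le_sub_one_of_pos (show (0:ℝ) < mu⁻¹ by positivity)
      rw [Real.log_inv] at h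
      have h3 := mul_le_mul_of_nonneg_left h hmu0.le
      have h4 : mu * mu⁻¹ = 1 := mul_inv_cancel₀ (ne_of_gt hmu0)
      nlinarith
    have hLgt : A - ε < (A - mu * A) / (-Real.log mu) := by
      have h1 : A * mu ≤ (A - mu * A) / (-Real.log mu) := by
        rw [le_div_iff₀ hL']
        nlinarith [mul_le_mul_of_nonneg_left hkey hA]
      have h2 : A - ε < A * mu := by
        have h3 : A * (1 - mu) ≤ A * (ε / (2 * (A + 1))) :=
          mul_le_mul_of_nonneg_left (by linarith) hA
        have h4 : A * (ε / (2 * (A + 1))) < ε := by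
          rw [← mul_div_assoc, div_lt_iff₀ hA1]
          nlinarith
        nlinarith
      linarith
    have hto : Tendsto (fun r : ℝ => ((1 / r) * F r - (1 / r) * F (mu * r)) / (-Real.log mu))
        atTop (nhds ((A - mu * A) / (-Real.log mu))) :=
      (hlim'.sub (hc mu hmu0)).div_const _
    have hev := hto.eventually_const_lt hLgt
    filter_upwards [hev, eventually_gt_atTop 0] with r hr1 hr
    refine lt_of_lt_of_le hr1 ?_
    have hmr : 0 < mu * r := mul_pos hmu0 hr
    have hrs : mu * r ≤ r := by nlinarith
    have h1 : F r - F (mu * r) ≤ m r * (Real.log r - Real.log (mu * r)) := by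
      rw [hdiff (mu * r) r hmr.le hrs]
      exact hlb (mu * r) r hmr hrs
    have hll : Real.log r - Real.log (mu * r) = -Real.log mu := by
      rw [Real.log_mul (ne_of_gt hmu0) (ne_of_gt hr)]; ring
    rw [hll] at h1
    rw [div_le_div_iff₀ hL' hr]
    have hexp : ((1 / r) * F r - (1 / r) * F (mu * r)) * r = F r - F (mu * r) := by
      field_simp
    rw [hexp]
    exact h1
  filter_upwards [hupper, hlower] with r h1 h2
  rw [Real.dist_eq, abs_sub_lt_iff]
  constructor <;> linarith

theorem counting_function_tauberian
    (n : ℝ → ℝ) (hnonneg : ∀ t : ℝ, 0 ≤ t → 0 ≤ n t)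
    (hmono : MonotoneOn n (Set.Ici (0 : ℝ)))
    (δ : ℝ) (hδ : 0 < δ) (hzero : ∀ t ∈ Set.Icc (0 : ℝ) δ, n t = 0)
    (A : ℝ)
    (hlim : Tendsto (fun r : ℝ => (1 / r) * ∫ t in (0:ℝ)..r, n t / t) atTop (nhds A)) :
    Tendsto (fun r : ℝ => n r / r) atTop (nhds A) := by
  set m : ℝ → ℝ := fun t => if t ≤ 0 then 0 else n t with hmdef
  have hnm : ∀ t : ℝ, 0 ≤ t → n t = m t := by
    intro t ht
    rcases eq_or_lt_of_le ht with h | h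
    · rw [hmdef]
      simp only [← h, le_refl, if_true]
      exact hzero 0 ⟨le_rfl, hδ.le⟩
    · rw [hmdef]
      simp [not_le.2 h]
  have hmmono : Monotone m := by
    intro a b hab
    rw [hmdef]
    dsimp only
    split_ifs with h1 h2 h2
    · exact le_rfl
    · exact hnonneg b (by linarith [not_le.1 h2])
    · linarith [not_le.1 h1]
    · exact hmono (Set.mem_Ici.2 (le_of_lt (not_le.1 h1)))
        (Set.mem_Ici.2 (le_of_lt (not_le.1 h2))) hab
  have hmnn : ∀ t, 0 ≤ m t := by
    intro t
    rw [hmdef]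
    dsimp only
    split_ifs with h
    · exact le_rfl
    · exact hnonneg t (le_of_lt (not_le.1 h))
  have hmz : ∀ t ≤ δ, m t = 0 := by
    intro t ht
    rw [hmdef]
    dsimp only
    split_ifs with h
    · rfl
    · exact hzero t ⟨le_of_lt (not_le.1 h), ht⟩
  have hlim' : Tendsto (fun r : ℝ => (1 / r) * ∫ t in (0:ℝ)..r, m t / t) atTop (nhds A) := by
    apply hlim.congr'
    filter_upwards [eventually_ge_atTop 0] with r hr
    congr 1
    apply intervalIntegral.integral_congr
    intro t ht
    rw [Set.uIcc_of_le hr] at ht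
    show n t / t = m t / t
    rw [hnm t ht.1]
  have := tauberian_aux m hmmono hmnn δ hδ hmz A hlim'
  apply this.congr'
  filter_upwards [eventually_gt_atTop 0] with r hr
  rw [hnm r hr.le]
end

section
/- Let φ₊ be the function defined by φ₊(x) = (2k/(k + r₋)) e^{iβ(r₋ − k)} e^{−i r₋ x} for x < β and φ₊(x) = e^{−i k x} + ((k − r₋)/(k + r₋)) e^{−2 i k β} e^{i k x} for x ≥ β, and let φ₋ be the function defined by φ₋(x) = e^{i r₋ x} + ((r₋ − k)/(r₋ + k)) e^{2 i r₋ β} e^{−i r₋ x} for x < β and φ₋(x) = (2 r₋/(k + r₋)) e^{iβ(r₋ − k)} e^{i k x} for x ≥ β. Then their Wronskian is constant: for every x ∈ ℝ, φ₋(x) φ₊'(x) − φ₋'(x) φ₊(x) = −4 i k r₋/(k + r₋) · e^{iβ(r₋ − k)}. -/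
open Complex MeasureTheory
open scoped Classical

/-- `u` is a solution of `-u'' + V u = z u`: `u` is differentiable with continuous
derivative, and the derivative satisfies the integrated form of the ODE. -/
def IsSolution (V : ℝ → ℝ) (z : ℂ) (u : ℝ → ℂ) : Prop :=
  Differentiable ℝ u ∧ Continuous (deriv u) ∧
    ∀ x : ℝ, deriv u x = deriv u 0 + ∫ t in (0:ℝ)..x, ((V t : ℂ) - z) * u t

/-! On each side of `β` both functions are combinations `a e^{icx} + b e^{-icx}` of plane
waves of a single frequency (`c = r₋` on the left, `c = k` on the right), and the Wronskian of
two such combinations is the constant `2ic (a₂ b₁ - a₁ b₂)`. The coefficients are chosen so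
that values and derivatives of the two branches match at `β`, which makes both functions
differentiable there with the derivative of the right branch. -/

noncomputable def planeWave (c a b : ℂ) (x : ℝ) : ℂ :=
  a * exp (I * c * x) + b * exp (-(I * c * x))

theorem hasDerivAt_planeWave (c a b : ℂ) (x : ℝ) :
    HasDerivAt (planeWave c a b) (I * c * planeWave c a (-b) x) x := by
  have hlin : HasDerivAt (fun t : ℝ => I * c * t) (I * c) x := by
    simpa using (ofRealCLM.hasDerivAt (x := x)).const_mul (I * c)
  refine ((hlin.cexp.const_mul a).add (hlin.neg.cexp.const_mul b)).congr_deriv ?_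
  simp only [planeWave, Pi.neg_apply]
  ring

theorem planeWave_wronskian (c a₁ b₁ a₂ b₂ : ℂ) (x : ℝ) :
    planeWave c a₁ b₁ x * (I * c * planeWave c a₂ (-b₂) x) -
        I * c * planeWave c a₁ (-b₁) x * planeWave c a₂ b₂ x =
      2 * I * c * (a₂ * b₁ - a₁ * b₂) := by
  have h : exp (I * c * x) * exp (-(I * c * x)) = 1 := by rw [← exp_add, add_neg_cancel, exp_zero]
  simp only [planeWave]
  linear_combination 2 * I * c * (a₂ * b₁ - a₁ * b₂) * h

theorem hasDerivAt_ite_lt {E : Type*} [NormedAddCommGroup E] [NormedSpace ℝ E]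
    {f g f' g' : ℝ → E} {β : ℝ} (hf : ∀ x, HasDerivAt f (f' x) x)
    (hg : ∀ x, HasDerivAt g (g' x) x) (hβ : f β = g β) (hβ' : f' β = g' β) (x : ℝ) :
    HasDerivAt (fun y => if y < β then f y else g y) (if x < β then f' x else g' x) x := by
  rcases lt_trichotomy x β with hx | rfl | hx
  · rw [if_pos hx]
    refine (hf x).congr_of_eventuallyEq ?_
    filter_upwards [Iio_mem_nhds hx] with y (hy : y < β)
    rw [if_pos hy]
  · rw [if_neg (lt_irrefl x)]
    have hleft : HasDerivWithinAt (fun y => if y < x then f y else g y) (g' x) (Set.Iic x) x := by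
      refine hβ' ▸ (hf x).hasDerivWithinAt.congr (fun y hy => ?_) (by simp [hβ])
      rcases (Set.mem_Iic.mp hy).lt_or_eq with hy | rfl
      · simp [hy]
      · simp [hβ]
    have hright : HasDerivWithinAt (fun y => if y < x then f y else g y) (g' x) (Set.Ici x) x :=
      (hg x).hasDerivWithinAt.congr (fun y (hy : x ≤ y) => by simp [not_lt.mpr hy]) (by simp)
    simpa [Set.Iic_union_Ici] using hleft.union hright
  · rw [if_neg (not_lt.mpr hx.le)]
    refine (hg x).congr_of_eventuallyEq ?_
    filter_upwards [Ioi_mem_nhds hx] with y (hy : β < y)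
    rw [if_neg (not_lt.mpr (le_of_lt hy))]

theorem exp_I_mul_mul_sub (z k r : ℂ) :
    exp (I * z * (r - k)) = exp (I * r * z) / exp (I * k * z) := by
  rw [← exp_sub]
  ring_nf

theorem exp_two_mul_I_mul (c z : ℂ) : exp (2 * I * c * z) = exp (I * c * z) ^ 2 := by
  rw [← exp_nat_mul]
  ring_nf

section Matching

variable (β : ℝ) {k rm : ℂ}

theorem phiPlus_branches_match (hne : k + rm ≠ 0) :
    planeWave rm 0 (2 * k / (k + rm) * exp (I * β * (rm - k))) β =
        planeWave k ((k - rm) / (k + rm) * exp (-(2 * I * k * β))) 1 β ∧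
      I * rm * planeWave rm 0 (-(2 * k / (k + rm) * exp (I * β * (rm - k)))) β =
        I * k * planeWave k ((k - rm) / (k + rm) * exp (-(2 * I * k * β))) (-1) β := by
  simp only [planeWave, exp_I_mul_mul_sub, exp_neg, exp_two_mul_I_mul]
  constructor <;> field_simp <;> ring

theorem phiMinus_branches_match (hne : k + rm ≠ 0) :
    planeWave rm 1 ((rm - k) / (rm + k) * exp (2 * I * rm * β)) β =
        planeWave k (2 * rm / (k + rm) * exp (I * β * (rm - k))) 0 β ∧
      I * rm * planeWave rm 1 (-((rm - k) / (rm + k) * exp (2 * I * rm * β))) β =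
        I * k * planeWave k (2 * rm / (k + rm) * exp (I * β * (rm - k))) (-0) β := by
  have hne' : rm + k ≠ 0 := by rwa [add_comm]
  simp only [planeWave, exp_I_mul_mul_sub, exp_neg, exp_two_mul_I_mul]
  constructor <;> field_simp <;> ring

end Matching

theorem wronskian_constant_general
    (β : ℝ) (k rm : ℂ)
    (hne : k + rm ≠ 0)
    (φp φm : ℝ → ℂ)
    (hφp : ∀ x : ℝ, φp x =
      if x < β then
        (2 * k / (k + rm)) * Complex.exp (Complex.I * (β : ℂ) * (rm - k)) *
          Complex.exp (-(Complex.I * rm * x))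
      else
        Complex.exp (-(Complex.I * k * x)) +
          ((k - rm) / (k + rm)) * Complex.exp (-(2 * Complex.I * k * (β : ℂ))) *
            Complex.exp (Complex.I * k * x))
    (hφm : ∀ x : ℝ, φm x =
      if x < β then
        Complex.exp (Complex.I * rm * x) +
          ((rm - k) / (rm + k)) * Complex.exp (2 * Complex.I * rm * (β : ℂ)) *
            Complex.exp (-(Complex.I * rm * x))
      else
        (2 * rm / (k + rm)) * Complex.exp (Complex.I * (β : ℂ) * (rm - k)) *
          Complex.exp (Complex.I * k * x)) :
    ∀ x : ℝ, φm x * deriv φp x - deriv φm x * φp x =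
      -4 * Complex.I * k * rm / (k + rm) * Complex.exp (Complex.I * (β : ℂ) * (rm - k)) := by
  have hp : φp = fun x =>
      if x < β then planeWave rm 0 (2 * k / (k + rm) * exp (I * β * (rm - k))) x
      else planeWave k ((k - rm) / (k + rm) * exp (-(2 * I * k * β))) 1 x := by
    funext x
    rw [hφp]
    split_ifs <;> simp only [planeWave] <;> ring
  have hm : φm = fun x =>
      if x < β then planeWave rm 1 ((rm - k) / (rm + k) * exp (2 * I * rm * β)) x
      else planeWave k (2 * rm / (k + rm) * exp (I * β * (rm - k))) 0 x := by
    funext x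
    rw [hφm]
    split_ifs <;> simp only [planeWave] <;> ring
  obtain ⟨hp_val, hp_der⟩ := phiPlus_branches_match β hne
  obtain ⟨hm_val, hm_der⟩ := phiMinus_branches_match β hne
  intro x
  have hp_deriv := hasDerivAt_ite_lt (fun x => hasDerivAt_planeWave _ _ _ x)
    (fun x => hasDerivAt_planeWave _ _ _ x) hp_val hp_der x
  have hm_deriv := hasDerivAt_ite_lt (fun x => hasDerivAt_planeWave _ _ _ x)
    (fun x => hasDerivAt_planeWave _ _ _ x) hm_val hm_der x
  rw [hp, hm, hp_deriv.deriv, hm_deriv.deriv]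
  dsimp only
  split_ifs <;> rw [planeWave_wronskian] <;> field_simp <;> ring

theorem wronskian_constant
    (β Vp Vm : ℝ) (k rm : ℂ)
    (hrm : rm ^ 2 = k ^ 2 + (Vp : ℂ) - (Vm : ℂ)) (hne : k + rm ≠ 0)
    (φp φm : ℝ → ℂ)
    (hφp : ∀ x : ℝ, φp x =
      if x < β then
        (2 * k / (k + rm)) * Complex.exp (Complex.I * (β : ℂ) * (rm - k)) *
          Complex.exp (-(Complex.I * rm * x))
      else
        Complex.exp (-(Complex.I * k * x)) +
          ((k - rm) / (k + rm)) * Complex.exp (-(2 * Complex.I * k * (β : ℂ))) *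
            Complex.exp (Complex.I * k * x))
    (hφm : ∀ x : ℝ, φm x =
      if x < β then
        Complex.exp (Complex.I * rm * x) +
          ((rm - k) / (rm + k)) * Complex.exp (2 * Complex.I * rm * (β : ℂ)) *
            Complex.exp (-(Complex.I * rm * x))
      else
        (2 * rm / (k + rm)) * Complex.exp (Complex.I * (β : ℂ) * (rm - k)) *
          Complex.exp (Complex.I * k * x)) :
    ∀ x : ℝ, φm x * deriv φp x - deriv φm x * φp x =
      -4 * Complex.I * k * rm / (k + rm) * Complex.exp (Complex.I * (β : ℂ) * (rm - k)) :=
  wronskian_constant_general β k rm hne φp φm hφp hφm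
end

section
/- Let V be a steplike potential with steps V₊, V₋ and threshold x_M, let z ∈ ℂ, and let r₊, r₋ ∈ ℂ satisfy r₊² = z − V₊ and r₋² = z − V₋. Suppose u and v are solutions of −u'' + V u = z u, and there are constants T₋, R₋, T₊, R₊ ∈ ℂ with: u(x) = T₋ e^{−i r₋ x} for all x ≤ −x_M and u(x) = e^{−i r₊ x} + R₋ e^{i r₊ x} for all x ≥ x_M; v(x) = e^{i r₋ x} + R₊ e^{−i r₋ x} for all x ≤ −x_M and v(x) = T₊ e^{i r₊ x} for all x ≥ x_M. Then r₋ T₋ = r₊ T₊. -/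
/-!
The Wronskian `W = u v' - u' v` of two solutions is constant: substituting the integrated
equation for `u'` and `v'`, the terms `∫ (V - z) u v` cancel, and what remains is differentiable
with derivative `u' v' - v' u' = 0`. Far to the right both solutions are combinations of
`e^{± i r₊ x}`, where `W = 2 i r₊ T₊`; far to the left they are combinations of `e^{± i r₋ x}`,
where `W = 2 i r₋ T₋`.
-/

open Complex MeasureTheory
open scoped Classical

open Filter Asymptotics Topology

theorem MeasureTheory.LocallyIntegrable.intervalIntegrable {E : Type*} [NormedAddCommGroup E]
    {g : ℝ → E} {μ : Measure ℝ} [IsLocallyFiniteMeasure μ] (hg : LocallyIntegrable g μ) (a b : ℝ) :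
    IntervalIntegrable g μ a b :=
  (hg.integrableOn_isCompact isCompact_uIcc).intervalIntegrable

theorem hasDerivAt_mul_primitive_sub_primitive_mul {f g : ℝ → ℂ} {f' : ℂ} {a t : ℝ}
    (hf : Continuous f) (hft : HasDerivAt f f' t) (hg : LocallyIntegrable g)
    (hgt : g =O[𝓝 t] fun _ => (1 : ℝ)) :
    HasDerivAt (fun x => f x * (∫ s in a..x, g s) - ∫ s in a..x, f s * g s)
      (f' * ∫ s in a..t, g s) t := by
  -- Up to a constant the function is `f x * F t + (f x - f t) * (F x - F t) + ∫ₜˣ (f t - f) g`,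
  -- and the last two terms are `o(x - t)` because `F` is continuous and `g` is bounded near `t`.
  set F := fun x => ∫ s in a..x, g s
  have hfg : LocallyIntegrable (fun s => f s * g s) := hg.continuous_mul hf
  have hrem : LocallyIntegrable (fun s => (f t - f s) * g s) :=
    hg.continuous_mul (continuous_const.sub hf)
  have hprod : HasDerivAt (fun x => (f x - f t) * (F x - F t)) 0 t := by
    have hF : Tendsto (fun x => F x - F t) (𝓝 t) (𝓝 0) := by
      have := ((intervalIntegral.continuous_primitive
        (fun b c => hg.intervalIntegrable b c) a).tendsto t).sub_const (F t)
      simpa [F] using this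
    rw [hasDerivAt_iff_isLittleO]
    simpa using hft.isBigO_sub.mul_isLittleO ((isLittleO_one_iff ℝ).2 hF)
  have hint : HasDerivAt (fun x => ∫ s in t..x, (f t - f s) * g s) 0 t := by
    have hcont : Tendsto (fun s => (f t - f s) * g s) (𝓝 t) (𝓝 0) := by
      have hf0 : Tendsto (fun s => f t - f s) (𝓝 t) (𝓝 0) := by
        simpa using (hf.tendsto t).const_sub (f t)
      have := ((isLittleO_one_iff ℝ).2 hf0).mul_isBigO hgt
      simpa using (isLittleO_one_iff ℂ).1 (by simpa using this)
    simpa using intervalIntegral.integral_hasDerivAt_right (hrem.intervalIntegrable t t)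
      hrem.aestronglyMeasurable.stronglyMeasurableAtFilter (by simpa [ContinuousAt] using hcont)
  have hdecomp : ∀ x, f x * F x - ∫ s in a..x, f s * g s = f x * F t + (f x - f t) * (F x - F t)
      + (∫ s in t..x, (f t - f s) * g s) - ∫ s in a..t, f s * g s := by
    intro x
    have hsplit : f t * (F x - F t) - ((∫ s in a..x, f s * g s) - ∫ s in a..t, f s * g s)
        = ∫ s in t..x, (f t - f s) * g s := by
      simp only [F, intervalIntegral.integral_interval_sub_left (hg.intervalIntegrable a x)
        (hg.intervalIntegrable a t), intervalIntegral.integral_interval_sub_left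
        (hfg.intervalIntegrable a x) (hfg.intervalIntegrable a t), sub_mul,
        ← intervalIntegral.integral_const_mul]
      rw [intervalIntegral.integral_sub ((hg.intervalIntegrable t x).const_mul _)
        (hfg.intervalIntegrable t x)]
    linear_combination hsplit
  have hsum := (((hft.mul_const (F t)).add hprod).add hint).sub_const (∫ s in a..t, f s * g s)
  exact (hsum.congr_deriv (by simp only [add_zero, F])).congr_of_eventuallyEq (.of_forall hdecomp)

noncomputable def wronskian (u v : ℝ → ℂ) (x : ℝ) : ℂ := u x * deriv v x - deriv u x * v x

noncomputable def planeWaves (k a b : ℂ) (x : ℝ) : ℂ := a * exp (I * k * x) + b * exp (-(I * k * x))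

theorem hasDerivAt_planeWaves (k a b : ℂ) (x : ℝ) :
    HasDerivAt (planeWaves k a b) (I * k * (a * exp (I * k * x) - b * exp (-(I * k * x)))) x := by
  have hlin : HasDerivAt (fun y : ℝ => I * k * y) (I * k) x := by
    simpa using (hasDerivAt_id x).ofReal_comp.const_mul (I * k)
  have hneg : HasDerivAt (fun y : ℝ => -(I * k * y)) (-(I * k)) x := hlin.neg
  exact ((hlin.cexp.const_mul a).add (hneg.cexp.const_mul b)).congr_deriv (by ring)

theorem wronskian_planeWaves (k a b c d : ℂ) (x : ℝ) :
    wronskian (planeWaves k a b) (planeWaves k c d) x = 2 * I * k * (b * c - a * d) := by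
  have hexp : exp (I * k * x) * exp (-(I * k * x)) = 1 := by
    rw [← exp_add, add_neg_cancel, exp_zero]
  rw [wronskian, (hasDerivAt_planeWaves k a b x).deriv, (hasDerivAt_planeWaves k c d x).deriv,
    planeWaves, planeWaves]
  linear_combination 2 * I * k * (b * c - a * d) * hexp

theorem Filter.EventuallyEq.wronskian_eq {u₁ u₂ v₁ v₂ : ℝ → ℂ} {x : ℝ} (hu : u₁ =ᶠ[𝓝 x] u₂)
    (hv : v₁ =ᶠ[𝓝 x] v₂) :
    wronskian u₁ v₁ x = wronskian u₂ v₂ x := by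
  rw [wronskian, wronskian, hu.eq_of_nhds, hv.eq_of_nhds, hu.deriv_eq, hv.deriv_eq]

section Potential

variable {V : ℝ → ℝ} {C : ℝ} (z : ℂ)

theorem norm_ofReal_sub_le (hC : ∀ x, |V x| ≤ C) (s : ℝ) : ‖(V s : ℂ) - z‖ ≤ C + ‖z‖ :=
  calc ‖(V s : ℂ) - z‖ ≤ ‖(V s : ℂ)‖ + ‖z‖ := norm_sub_le _ _
    _ ≤ C + ‖z‖ := by rw [norm_real, Real.norm_eq_abs]; exact add_le_add_left (hC s) _

theorem locallyIntegrable_ofReal_sub (hV : Measurable V) (hC : ∀ x, |V x| ≤ C) :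
    LocallyIntegrable (fun s => (V s : ℂ) - z) :=
  (memLp_top_of_bound ((measurable_ofReal.comp hV).sub_const z).aestronglyMeasurable
    (C + ‖z‖) (.of_forall (norm_ofReal_sub_le z hC))).locallyIntegrable le_top

theorem isBigO_ofReal_sub_mul {w : ℝ → ℂ} (hC : ∀ x, |V x| ≤ C) (hw : Continuous w)
    (t : ℝ) : (fun s => ((V s : ℂ) - z) * w s) =O[𝓝 t] fun _ => (1 : ℝ) := by
  have hG : (fun s => (V s : ℂ) - z) =O[𝓝 t] fun _ => (1 : ℝ) :=
    isBigO_iff.2 ⟨C + ‖z‖, .of_forall fun s => by simpa using norm_ofReal_sub_le z hC s⟩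
  simpa using hG.mul ((hw.tendsto t).isBigO_one ℝ)

end Potential

namespace IsSolution

variable {V : ℝ → ℝ} {C : ℝ} {z : ℂ} {u v : ℝ → ℂ}

theorem hasDerivAt_wronskian (hV : Measurable V) (hC : ∀ x, |V x| ≤ C)
    (hu : IsSolution V z u) (hv : IsSolution V z v) (t : ℝ) :
    HasDerivAt (wronskian u v) 0 t := by
  have hG := locallyIntegrable_ofReal_sub z hV hC
  have hΦ := fun {f w : ℝ → ℂ} (hf : Differentiable ℝ f) (hw : Continuous w) =>
    hasDerivAt_mul_primitive_sub_primitive_mul (a := 0) hf.continuous (hf t).hasDerivAt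
      (hG.mul_continuous hw) (isBigO_ofReal_sub_mul z hC hw t)
  have hsymm : ∀ x, ∫ s in (0:ℝ)..x, u s * (((V s : ℂ) - z) * v s)
      = ∫ s in (0:ℝ)..x, v s * (((V s : ℂ) - z) * u s) :=
    fun x => intervalIntegral.integral_congr fun s _ => by ring
  have hexpand : wronskian u v = fun x => deriv v 0 * u x - deriv u 0 * v x
      + (u x * (∫ s in (0:ℝ)..x, ((V s : ℂ) - z) * v s)
          - ∫ s in (0:ℝ)..x, u s * (((V s : ℂ) - z) * v s))
      - (v x * (∫ s in (0:ℝ)..x, ((V s : ℂ) - z) * u s)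
          - ∫ s in (0:ℝ)..x, v s * (((V s : ℂ) - z) * u s)) := by
    funext x
    rw [wronskian, hu.2.2 x, hv.2.2 x, hsymm x]
    ring
  rw [hexpand]
  refine (((((hu.1 t).hasDerivAt.const_mul _).sub ((hv.1 t).hasDerivAt.const_mul _)).add
    (hΦ hu.1 hv.1.continuous)).sub (hΦ hv.1 hu.1.continuous)).congr_deriv ?_
  linear_combination deriv v t * hu.2.2 t - deriv u t * hv.2.2 t

theorem wronskian_eq (hV : Measurable V) (hC : ∀ x, |V x| ≤ C)
    (hu : IsSolution V z u) (hv : IsSolution V z v) (x y : ℝ) :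
    wronskian u v x = wronskian u v y :=
  is_const_of_deriv_eq_zero (fun t => (hasDerivAt_wronskian hV hC hu hv t).differentiableAt)
    (fun t => (hasDerivAt_wronskian hV hC hu hv t).deriv) x y

end IsSolution

theorem transmission_relation_general
    (V : ℝ → ℝ) (xM : ℝ)
    (hVmeas : Measurable V) (hVbdd : ∃ C : ℝ, ∀ x : ℝ, |V x| ≤ C)
    (z rp rm : ℂ)
    (u v : ℝ → ℂ) (hu : IsSolution V z u) (hv : IsSolution V z v)
    (Tm Rm Tp Rp : ℂ)
    (huL : ∀ x : ℝ, x ≤ -xM → u x = Tm * Complex.exp (-(Complex.I * rm * x)))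
    (huR : ∀ x : ℝ, xM ≤ x →
      u x = Complex.exp (-(Complex.I * rp * x)) + Rm * Complex.exp (Complex.I * rp * x))
    (hvL : ∀ x : ℝ, x ≤ -xM →
      v x = Complex.exp (Complex.I * rm * x) + Rp * Complex.exp (-(Complex.I * rm * x)))
    (hvR : ∀ x : ℝ, xM ≤ x → v x = Tp * Complex.exp (Complex.I * rp * x)) :
    rm * Tm = rp * Tp := by
  obtain ⟨C, hC⟩ := hVbdd
  have hright : ∀ᶠ y in 𝓝 (xM + 1), xM ≤ y := eventually_ge_nhds (lt_add_one xM)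
  have hleft : ∀ᶠ y in 𝓝 (-(xM + 1)), y ≤ -xM := eventually_le_nhds (by linarith)
  have huR' : u =ᶠ[𝓝 (xM + 1)] planeWaves rp Rm 1 := by
    filter_upwards [hright] with y hy
    rw [huR y hy, planeWaves]; ring
  have hvR' : v =ᶠ[𝓝 (xM + 1)] planeWaves rp Tp 0 := by
    filter_upwards [hright] with y hy
    rw [hvR y hy, planeWaves]; ring
  have huL' : u =ᶠ[𝓝 (-(xM + 1))] planeWaves rm 0 Tm := by
    filter_upwards [hleft] with y hy
    rw [huL y hy, planeWaves]; ring
  have hvL' : v =ᶠ[𝓝 (-(xM + 1))] planeWaves rm 1 Rp := by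
    filter_upwards [hleft] with y hy
    rw [hvL y hy, planeWaves]; ring
  have hW := hu.wronskian_eq hVmeas hC hv (-(xM + 1)) (xM + 1)
  rw [huL'.wronskian_eq hvL', huR'.wronskian_eq hvR', wronskian_planeWaves,
    wronskian_planeWaves] at hW
  exact mul_left_cancel₀ (by simp [I_ne_zero] : (2 : ℂ) * I ≠ 0) (by linear_combination hW)

theorem transmission_relation
    (V : ℝ → ℝ) (Vp Vm xM : ℝ)
    (hVmeas : Measurable V) (hVbdd : ∃ C : ℝ, ∀ x : ℝ, |V x| ≤ C)
    (hxM : 0 < xM)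
    (hVp : ∀ x : ℝ, xM < x → V x = Vp)
    (hVm : ∀ x : ℝ, x < -xM → V x = Vm)
    (z rp rm : ℂ) (hrp : rp ^ 2 = z - (Vp : ℂ)) (hrm : rm ^ 2 = z - (Vm : ℂ))
    (u v : ℝ → ℂ) (hu : IsSolution V z u) (hv : IsSolution V z v)
    (Tm Rm Tp Rp : ℂ)
    (huL : ∀ x : ℝ, x ≤ -xM → u x = Tm * Complex.exp (-(Complex.I * rm * x)))
    (huR : ∀ x : ℝ, xM ≤ x →
      u x = Complex.exp (-(Complex.I * rp * x)) + Rm * Complex.exp (Complex.I * rp * x))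
    (hvL : ∀ x : ℝ, x ≤ -xM →
      v x = Complex.exp (Complex.I * rm * x) + Rp * Complex.exp (-(Complex.I * rm * x)))
    (hvR : ∀ x : ℝ, xM ≤ x → v x = Tp * Complex.exp (Complex.I * rp * x)) :
    rm * Tm = rp * Tp :=
  transmission_relation_general V xM hVmeas hVbdd z rp rm u v hu hv Tm Rm Tp Rp huL huR hvL hvR
end
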